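/- arXiv:1507.01385 — 2 statements merged into one kernel-verified Lean document; each statement's English description precedes it below -/
import Mathlib

section
/- Let R be an associative unital (not necessarily commutative) ring, I a two-sided ideal of R, G a group, and φ : G →* Rˣ a group homomorphism such that (φ g : R) − 1 ∈ I for every g ∈ G. Then for every n ≥ 0 and every g in the n-th term of the lower central series of G (indexed so that the 0-th term is G itself), one has (φ g : R) − 1 ∈ I^(n+1). -/
/-- The `m`-th power of a two-sided ideal `I` of a ring `R`, with `I ^ 0 = R` and
`I ^ (n+1)` the two-sided ideal generated by products `a * b` with `a ∈ I`, `b ∈ I ^ n`. -/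
protected def TwoSidedIdeal.npow {R : Type*} [Ring R] (I : TwoSidedIdeal R) : ℕ → TwoSidedIdeal R
  | 0 => ⊤
  | n + 1 => TwoSidedIdeal.span {x | ∃ a ∈ I, ∃ b ∈ TwoSidedIdeal.npow I n, x = a * b}

instance {R : Type*} [Ring R] : Pow (TwoSidedIdeal R) ℕ :=
  ⟨fun I n => TwoSidedIdeal.npow I n⟩

/-! For a two-sided ideal `J`, the units `u` with `u - 1 ∈ J` form a subgroup `1 + J` of `Rˣ`, and
`⁅1 + I ^ a, 1 + I ^ b⁆ ⊆ 1 + I ^ (a + b)` because `u v - v u = (u - 1)(v - 1) - (v - 1)(u - 1)`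
and `u v u⁻¹ v⁻¹ - 1 = (u v - v u) u⁻¹ v⁻¹`. Since `φ G ⊆ 1 + I`, induction along the lower central
series gives `φ (γₙ G) ⊆ 1 + I ^ (n + 1)`. -/

namespace TwoSidedIdeal

variable {R : Type*} [Ring R] {I : TwoSidedIdeal R}

theorem pow_succ_eq_span (I : TwoSidedIdeal R) (n : ℕ) :
    I ^ (n + 1) = span {x | ∃ a ∈ I, ∃ b ∈ I ^ n, x = a * b} :=
  rfl

theorem mul_mem_pow_succ {n : ℕ} {a b : R} (ha : a ∈ I) (hb : b ∈ I ^ n) :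
    a * b ∈ I ^ (n + 1) :=
  subset_span ⟨a, ha, b, hb, rfl⟩

theorem mul_mem_pow_add {m k : ℕ} {a b : R} (ha : a ∈ I ^ m) (hb : b ∈ I ^ k) :
    a * b ∈ I ^ (m + k) := by
  induction m generalizing a b with
  | zero => simpa using (I ^ k).mul_mem_left a b hb
  | succ m ih =>
    rw [pow_succ_eq_span] at ha
    induction ha using span_induction generalizing b with
    | mem x hx =>
      obtain ⟨p, hp, q, hq, rfl⟩ := hx
      rw [mul_assoc, Nat.succ_add]
      exact mul_mem_pow_succ hp (ih hq hb)
    | zero => simp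
    | add x y _ _ hx hy => simpa only [add_mul] using add_mem _ (hx hb) (hy hb)
    | neg x _ hx => simpa only [neg_mul] using neg_mem _ (hx hb)
    | left_absorb r x _ hx => simpa only [mul_assoc] using mul_mem_left _ r _ (hx hb)
    | right_absorb r x _ hx => simpa only [mul_assoc] using hx ((I ^ k).mul_mem_left r b hb)

@[simp]
theorem pow_one (I : TwoSidedIdeal R) : I ^ 1 = I := by
  refine le_antisymm (span_le.2 ?_) fun a ha ↦ by
    simpa using mul_mem_pow_succ (n := 0) (b := 1) ha trivial
  rintro _ ⟨a, ha, b, -, rfl⟩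
  exact I.mul_mem_right a b ha

def principalUnits (I : TwoSidedIdeal R) : Subgroup Rˣ where
  carrier := {u | (u : R) - 1 ∈ I}
  one_mem' := by simp
  mul_mem' {u v} hu hv := by
    have key : ((u * v : Rˣ) : R) - 1 = ((u : R) - 1) * v + ((v : R) - 1) := by
      push_cast; noncomm_ring
    simpa only [Set.mem_ofPred_eq, key] using add_mem _ (mul_mem_right _ _ _ hu) hv
  inv_mem' {u} hu := by
    have key : ((u⁻¹ : Rˣ) : R) - 1 = -(((u⁻¹ : Rˣ) : R) * ((u : R) - 1)) := by
      rw [mul_sub, Units.inv_mul, mul_one, neg_sub]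
    simpa only [Set.mem_ofPred_eq, key] using neg_mem _ (mul_mem_left _ _ _ hu)

@[simp]
theorem mem_principalUnits {u : Rˣ} : u ∈ I.principalUnits ↔ (u : R) - 1 ∈ I :=
  Iff.rfl

theorem commutator_principalUnits_pow_le (I : TwoSidedIdeal R) (a b : ℕ) :
    ⁅(I ^ a).principalUnits, (I ^ b).principalUnits⁆ ≤ (I ^ (a + b)).principalUnits := by
  refine Subgroup.commutator_le.2 fun u hu v hv ↦ ?_
  rw [mem_principalUnits] at hu hv ⊢
  set w : R := ((u⁻¹ * v⁻¹ : Rˣ) : R)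
  have hvuw : (v : R) * u * w = 1 := by simp [w, mul_assoc]
  have key : ((u * v * u⁻¹ * v⁻¹ : Rˣ) : R) - 1 =
      (((u : R) - 1) * ((v : R) - 1) - ((v : R) - 1) * ((u : R) - 1)) * w :=
    calc ((u * v * u⁻¹ * v⁻¹ : Rˣ) : R) - 1 = u * v * w - v * u * w := by
          rw [hvuw]; simp only [w, Units.val_mul, mul_assoc]
      _ = _ := by noncomm_ring
  rw [commutatorElement_def, key]
  refine mul_mem_right _ _ _ (sub_mem _ (mul_mem_pow_add hu hv) ?_)
  rw [add_comm]
  exact mul_mem_pow_add hv hu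

theorem lowerCentralSeries_le_principalUnits_pow {S : Subgroup Rˣ} (hS : S ≤ I.principalUnits)
    (n : ℕ) : S.lowerCentralSeries n ≤ (I ^ (n + 1)).principalUnits := by
  induction n with
  | zero => simpa using hS
  | succ n ih =>
    calc S.lowerCentralSeries (n + 1) ≤ ⁅(I ^ (n + 1)).principalUnits, (I ^ 1).principalUnits⁆ :=
          Subgroup.commutator_mono ih (by simpa using hS)
      _ ≤ (I ^ (n + 1 + 1)).principalUnits := commutator_principalUnits_pow_le I (n + 1) 1

end TwoSidedIdeal

theorem stmt5 {R : Type*} [Ring R] (I : TwoSidedIdeal R)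
    {G : Type*} [Group G] (φ : G →* Rˣ)
    (hφ : ∀ g : G, ((φ g : Rˣ) : R) - 1 ∈ I) :
    ∀ n : ℕ, ∀ g ∈ (⊤ : Subgroup G).lowerCentralSeries n, ((φ g : Rˣ) : R) - 1 ∈ I ^ (n + 1) := by
  intro n g hg
  have hrange : (⊤ : Subgroup G).map φ ≤ I.principalUnits := by
    rintro _ ⟨g, -, rfl⟩
    exact hφ g
  refine I.lowerCentralSeries_le_principalUnits_pow hrange n ?_
  rw [← Subgroup.map_lowerCentralSeries]
  exact Subgroup.mem_map_of_mem φ hg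
end

section
/- Let σ be a type, R an associative unital (not necessarily commutative) ring, I a two-sided ideal of R, and k ≥ 0 an integer. Let x, y : σ → R satisfy x s ∈ I, y s ∈ I, and x s − y s ∈ I^(k+1) for every s ∈ σ. Then for every m ≥ 1 and every word s₁, …, s_m of elements of σ, the difference (x s₁)·(x s₂)⋯(x s_m) − (y s₁)·(y s₂)⋯(y s_m) − Σ_{t=1}^{m} (y s₁)⋯(y s_{t−1})·(x s_t − y s_t)·(y s_{t+1})⋯(y s_m) lies in I^(m+2k). -/
section aux

variable {R : Type*} [Ring R] (I : TwoSidedIdeal R)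

lemma pow_def (n : ℕ) : I ^ n = TwoSidedIdeal.npow I n := rfl

lemma mem_pow_zero (c : R) : c ∈ I ^ 0 := by
  rw [pow_def]
  exact trivial

lemma mul_mem_pow_succ {a b : R} {n : ℕ} (ha : a ∈ I) (hb : b ∈ I ^ n) :
    a * b ∈ I ^ (n + 1) := by
  rw [pow_def] at hb ⊢
  exact TwoSidedIdeal.subset_span ⟨a, ha, b, hb, rfl⟩

lemma mem_pow_one {a : R} (ha : a ∈ I) : a ∈ I ^ 1 := by
  simpa using mul_mem_pow_succ I ha (mem_pow_zero I 1)

/-- key multiplication lemma: `I^m * I^n ⊆ I^(m+n)`. -/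
lemma mul_mem_pow_add : ∀ (m : ℕ) {c : R}, c ∈ I ^ m → ∀ (n : ℕ) {d : R}, d ∈ I ^ n →
    c * d ∈ I ^ (m + n) := by
  intro m
  induction m with
  | zero =>
    intro c _ n d hd
    simpa using (I ^ n).mul_mem_left c d hd
  | succ m ih =>
    intro c hc n d hd
    -- the set of `c` such that `c * d ∈ I ^ (m + 1 + n)` for all `d ∈ I ^ n`
    -- is a two-sided ideal containing the generators of `I ^ (m+1)`
    let J : TwoSidedIdeal R := TwoSidedIdeal.mk'
      {c | ∀ d : R, d ∈ I ^ n → c * d ∈ I ^ (m + 1 + n)}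
      (by intro d hd; simpa using (I ^ (m + 1 + n)).zero_mem)
      (by intro a b ha hb d hd
          rw [add_mul]
          exact (I ^ (m + 1 + n)).add_mem (ha d hd) (hb d hd))
      (by intro a ha d hd
          rw [neg_mul]
          exact (I ^ (m + 1 + n)).neg_mem (ha d hd))
      (by intro r a ha d hd
          rw [mul_assoc]
          exact (I ^ (m + 1 + n)).mul_mem_left _ _ (ha d hd))
      (by intro a r ha d hd
          rw [mul_assoc]
          exact ha _ ((I ^ n).mul_mem_left r d hd))
    have hcJ : c ∈ J := by
      rw [pow_def] at hc
      refine TwoSidedIdeal.mem_span_iff.mp hc J ?_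
      rintro _ ⟨a, ha, b, hb, rfl⟩
      show a * b ∈ J
      rw [show J = _ from rfl, TwoSidedIdeal.mem_mk']
      intro d hd
      have h1 : b * d ∈ I ^ (m + n) := ih hb n hd
      have h2 : a * (b * d) ∈ I ^ (m + n + 1) := mul_mem_pow_succ I ha h1
      rw [mul_assoc]
      have h3 : m + n + 1 = m + 1 + n := by omega
      rwa [h3] at h2
    rw [show J = _ from rfl, TwoSidedIdeal.mem_mk'] at hcJ
    exact hcJ d hd

lemma pow_congr {m n : ℕ} {c : R} (h : m = n) (hc : c ∈ I ^ m) : c ∈ I ^ n := h ▸ hc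

lemma prod_mem_pow {σ : Type*} {y : σ → R} (hy : ∀ s, y s ∈ I) :
    ∀ w : List σ, (w.map y).prod ∈ I ^ w.length := by
  intro w
  induction w with
  | nil => simpa using mem_pow_zero I 1
  | cons a v ih =>
    simp only [List.map_cons, List.prod_cons, List.length_cons]
    exact pow_congr I (by omega)
      (mul_mem_pow_add I 1 (mem_pow_one I (hy a)) v.length ih)

/-- first-order estimate -/
lemma first_order {σ : Type*} (k : ℕ) (x y : σ → R) (hx : ∀ s, x s ∈ I) (hy : ∀ s, y s ∈ I)
    (hxy : ∀ s, x s - y s ∈ I ^ (k + 1)) :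
    ∀ w : List σ, (w.map x).prod - (w.map y).prod ∈ I ^ (w.length + k) := by
  intro w
  induction w with
  | nil => simpa using (I ^ (0 + k)).zero_mem
  | cons a v ih =>
    simp only [List.map_cons, List.prod_cons, List.length_cons]
    have key : x a * (v.map x).prod - y a * (v.map y).prod =
        (x a - y a) * (v.map x).prod + y a * ((v.map x).prod - (v.map y).prod) := by
      noncomm_ring
    rw [key]
    refine (I ^ (v.length + 1 + k)).add_mem ?_ ?_
    · exact pow_congr I (by omega)
        (mul_mem_pow_add I (k + 1) (hxy a) v.length (prod_mem_pow I hx v))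
    · exact pow_congr I (by omega)
        (mul_mem_pow_add I 1 (mem_pow_one I (hy a)) (v.length + k) ih)

end aux

theorem stmt8 {σ R : Type*} [Ring R] (I : TwoSidedIdeal R) (k : ℕ)
    (x y : σ → R) (hx : ∀ s, x s ∈ I) (hy : ∀ s, y s ∈ I)
    (hxy : ∀ s, x s - y s ∈ I ^ (k + 1)) :
    ∀ w : List σ, 1 ≤ w.length →
      (w.map x).prod - (w.map y).prod -
          ∑ t : Fin w.length,
            ((w.take (t : ℕ)).map y).prod * (x (w.get t) - y (w.get t)) *
              ((w.drop ((t : ℕ) + 1)).map y).prod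
        ∈ I ^ (w.length + 2 * k) := by
  suffices H : ∀ w : List σ,
      (w.map x).prod - (w.map y).prod -
          ∑ t : Fin w.length,
            ((w.take (t : ℕ)).map y).prod * (x (w.get t) - y (w.get t)) *
              ((w.drop ((t : ℕ) + 1)).map y).prod
        ∈ I ^ (w.length + 2 * k) by
    intro w _; exact H w
  intro w
  induction w with
  | nil => simpa using (I ^ (0 + 2 * k)).zero_mem
  | cons a v ih =>
    simp only [List.length_cons, List.map_cons, List.prod_cons]
    rw [Fin.sum_univ_succ]
    simp only [Fin.val_zero, Fin.val_succ, List.take_zero, List.take_succ_cons,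
      List.drop_succ_cons, List.get_cons_zero, List.get_cons_succ, List.map_nil,
      List.prod_nil, one_mul, List.map_cons, List.prod_cons, Nat.zero_add, List.drop_zero]
    have hsum : ∑ t : Fin v.length,
        y a * ((v.take (t : ℕ)).map y).prod *
          (x ((a :: v).get t.succ) - y ((a :: v).get t.succ)) *
            ((v.drop ((t : ℕ) + 1)).map y).prod =
        y a * ∑ t : Fin v.length,
          ((v.take (t : ℕ)).map y).prod * (x (v.get t) - y (v.get t)) *
            ((v.drop ((t : ℕ) + 1)).map y).prod := by
      rw [Finset.mul_sum]
      refine Finset.sum_congr rfl fun t _ => ?_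
      have hget : (a :: v).get t.succ = v.get t := rfl
      rw [hget]
      noncomm_ring
    rw [hsum]
    have hmem : (x a - y a) * ((v.map x).prod - (v.map y).prod) +
        y a * ((v.map x).prod - (v.map y).prod -
          ∑ t : Fin v.length,
            ((v.take (t : ℕ)).map y).prod * (x (v.get t) - y (v.get t)) *
              ((v.drop ((t : ℕ) + 1)).map y).prod) ∈ I ^ (v.length + 1 + 2 * k) := by
      refine (I ^ (v.length + 1 + 2 * k)).add_mem ?_ ?_
      · exact pow_congr I (by omega)
          (mul_mem_pow_add I (k + 1) (hxy a) (v.length + k)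
            (first_order I k x y hx hy hxy v))
      · exact pow_congr I (by omega)
          (mul_mem_pow_add I 1 (mem_pow_one I (hy a)) (v.length + 2 * k) ih)
    convert hmem using 1
    noncomm_ring
end
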